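/- arXiv:1502.04325 — 2 statements merged into one kernel-verified Lean document; each statement's English description precedes it below -/
import Mathlib

section
/- Assume in addition that there is a constant K₀ ≥ 0 such that ∑_{i=1}^m f_i(λ)λ_i ≥ −K₀(1 + ∑_{i=1}^m f_i(λ)) for every λ ∈ Γ. Let K ⊂ Γ be compact and M > 0. Then there exists a constant C > 0, depending only on m, f, K₀, K and M, such that for every σ ∈ (0,1], every λ ∈ Γ with |λ_m| ≤ M, every μ ∈ K with f(μ) ≥ f(λ), and every index r ∈ {1,…,m−1}: ∑_{i=1}^{m−1} f_i(λ)|λ_i| ≤ σ ∑_{1 ≤ i ≤ m−1, i ≠ r} f_i(λ)λ_i² + (C/σ) ∑_{i=1}^m f_i(λ) + C. -/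
/-!
Write `fᵢ = fᵢ(λ)` and `T = ∑ᵢ fᵢλᵢ`. Concavity and `f(λ) ≤ f(μ)` give `T ≤ ∑ᵢ fᵢμᵢ`, which is
at most `B ∑ᵢ fᵢ` for a bound `B` of `K`; the structural condition bounds `T` from below, so
`|T| ≤ (B + K₀)∑ᵢ fᵢ + K₀`. Removing the term `i = m`, controlled by `|λ_m| ≤ M`, bounds
`|∑_{i<m} fᵢλᵢ|` likewise. This controls the single term `f_r|λ_r|` by the other terms `fᵢ|λᵢ|`
(`i < m`, `i ≠ r`), and those are absorbed by `2|t| ≤ σt² + 1/σ`.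
-/

open Filter Topology

/-- The `i`-th partial derivative `fᵢ(x) = ∂f/∂λᵢ(x)`. -/
noncomputable def pd {m : ℕ} (f : (Fin m → ℝ) → ℝ) (x : Fin m → ℝ) (i : Fin m) : ℝ :=
  fderiv ℝ f x (Pi.single i 1)

/-- The Euclidean norm of a vector in `ℝ^m`. -/
noncomputable def eNorm {m : ℕ} (v : Fin m → ℝ) : ℝ :=
  Real.sqrt (∑ i, (v i) ^ 2)

/-- The unit normal `ν_x = Df(x)/|Df(x)|`. -/
noncomputable def nuv {m : ℕ} (f : (Fin m → ℝ) → ℝ) (x : Fin m → ℝ) : Fin m → ℝ :=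
  fun i => pd f x i / eNorm (pd f x)

theorem ConcaveOn.sub_le_fderiv_apply_sub {E : Type*} [NormedAddCommGroup E] [NormedSpace ℝ E]
    {s : Set E} {f : E → ℝ} (hf : ConcaveOn ℝ s f) {x y : E} (hx : x ∈ s) (hy : y ∈ s)
    (hfx : DifferentiableAt ℝ f x) : f y - f x ≤ fderiv ℝ f x (y - x) := by
  have hline : HasDerivAt (f ∘ AffineMap.lineMap x y) (fderiv ℝ f x (y - x)) (0 : ℝ) := by
    refine HasFDerivAt.comp_hasDerivAt (0 : ℝ) ?_ AffineMap.hasDerivAt_lineMap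
    simpa using hfx.hasFDerivAt
  have := (hf.comp_affineMap (AffineMap.lineMap x y)).slope_le_of_hasDerivAt
    (x := 0) (y := 1) (by simpa) (by simpa) one_pos hline
  simpa [slope_def_field] using this

theorem fderiv_apply_eq_sum_pd {m : ℕ} (f : (Fin m → ℝ) → ℝ) (x v : Fin m → ℝ) :
    fderiv ℝ f x v = ∑ i, v i * pd f x i := by
  conv_lhs => rw [pi_eq_sum_univ' v, map_sum]
  simp [pd]

theorem ConcaveOn.sum_pd_mul_le {m : ℕ} {s : Set (Fin m → ℝ)} {f : (Fin m → ℝ) → ℝ}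
    (hf : ConcaveOn ℝ s f) {x y : Fin m → ℝ} (hx : x ∈ s) (hy : y ∈ s)
    (hfx : DifferentiableAt ℝ f x) (hxy : f x ≤ f y) :
    ∑ i, pd f x i * x i ≤ ∑ i, pd f x i * y i := by
  have h := hf.sub_le_fderiv_apply_sub hx hy hfx
  rw [fderiv_apply_eq_sum_pd] at h
  simp only [Pi.sub_apply, sub_mul, Finset.sum_sub_distrib] at h
  simp only [mul_comm (pd f x _)]
  linarith

theorem ConcaveOn.sum_pd_mul_le_mul_sum {m : ℕ} {s : Set (Fin m → ℝ)} {f : (Fin m → ℝ) → ℝ}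
    (hf : ConcaveOn ℝ s f) {x y : Fin m → ℝ} (hx : x ∈ s) (hy : y ∈ s)
    (hfx : DifferentiableAt ℝ f x) (hxy : f x ≤ f y) (hpd : ∀ i, 0 ≤ pd f x i)
    {B : ℝ} (hyB : ‖y‖ ≤ B) :
    ∑ i, pd f x i * x i ≤ B * ∑ i, pd f x i := by
  refine (hf.sum_pd_mul_le hx hy hfx hxy).trans ?_
  rw [Finset.mul_sum]
  refine Finset.sum_le_sum fun i _ => ?_
  rw [mul_comm B]
  exact mul_le_mul_of_nonneg_left ((le_abs_self _).trans ((norm_le_pi_norm y i).trans hyB)) (hpd i)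

theorem Finset.sum_mul_abs_le_abs_sum_add {ι : Type*} [DecidableEq ι] {s : Finset ι}
    {g x : ι → ℝ} (hg : ∀ i ∈ s, 0 ≤ g i) {r : ι} (hr : r ∈ s) :
    ∑ i ∈ s, g i * |x i| ≤ |∑ i ∈ s, g i * x i| + 2 * ∑ i ∈ s.erase r, g i * |x i| := by
  have hrest : |∑ i ∈ s.erase r, g i * x i| ≤ ∑ i ∈ s.erase r, g i * |x i| := by
    refine (Finset.abs_sum_le_sum_abs _ _).trans_eq (Finset.sum_congr rfl fun i hi => ?_)
    rw [abs_mul, abs_of_nonneg (hg i (Finset.mem_of_mem_erase hi))]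
  have hsplit := Finset.add_sum_erase s (fun i => g i * x i) hr
  have hr' : g r * |x r| = |∑ i ∈ s, g i * x i - ∑ i ∈ s.erase r, g i * x i| := by
    rw [← hsplit, add_sub_cancel_right, abs_mul, abs_of_nonneg (hg r hr)]
  rw [← Finset.add_sum_erase s _ hr, hr']
  linarith [abs_sub (∑ i ∈ s, g i * x i) (∑ i ∈ s.erase r, g i * x i)]

theorem Finset.two_mul_sum_mul_abs_le {ι : Type*} {s : Finset ι} {g : ι → ℝ}
    (hg : ∀ i ∈ s, 0 ≤ g i) (x : ι → ℝ) {σ : ℝ} (hσ : 0 < σ) :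
    2 * ∑ i ∈ s, g i * |x i| ≤ σ * ∑ i ∈ s, g i * x i ^ 2 + σ⁻¹ * ∑ i ∈ s, g i := by
  rw [Finset.mul_sum, Finset.mul_sum, Finset.mul_sum, ← Finset.sum_add_distrib]
  refine Finset.sum_le_sum fun i hi => ?_
  have hamgm : 2 * |x i| ≤ σ * x i ^ 2 + σ⁻¹ := by
    rw [← mul_le_mul_iff_of_pos_left hσ, mul_add, mul_inv_cancel₀ hσ.ne']
    have hsq : σ * (σ * x i ^ 2) = (σ * |x i|) ^ 2 := by rw [mul_pow, sq_abs]; ring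
    nlinarith [sq_nonneg (σ * |x i| - 1)]
  nlinarith [mul_le_mul_of_nonneg_left hamgm (hg i hi)]

theorem Finset.sum_mul_abs_le_of_abs_sum_mul_le {ι : Type*} [DecidableEq ι] {s : Finset ι}
    {g x : ι → ℝ} (hg : ∀ i ∈ s, 0 ≤ g i) {r : ι} (hr : r ∈ s) {σ A F : ℝ} (hσ : 0 < σ)
    (hσ1 : σ ≤ 1) (hA : 0 ≤ A) (hgF : ∑ i ∈ s, g i ≤ F)
    (hsum : |∑ i ∈ s, g i * x i| ≤ A * F + A) :
    ∑ i ∈ s, g i * |x i|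
      ≤ σ * ∑ i ∈ s.erase r, g i * x i ^ 2 + (1 + A) / σ * F + (1 + A) := by
  have habs := Finset.sum_mul_abs_le_abs_sum_add (x := x) hg hr
  have hamgm := Finset.two_mul_sum_mul_abs_le (s := s.erase r)
    (fun i hi => hg i (Finset.mem_of_mem_erase hi)) x hσ
  have hrest : ∑ i ∈ s.erase r, g i ≤ F :=
    (Finset.sum_le_sum_of_subset_of_nonneg (Finset.erase_subset r s)
      fun i hi _ => hg i hi).trans hgF
  have hF : 0 ≤ F := (Finset.sum_nonneg hg).trans hgF
  have hAσ : A ≤ A / σ := le_div_self hA hσ hσ1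
  have hσF : σ⁻¹ * ∑ i ∈ s.erase r, g i ≤ σ⁻¹ * F :=
    mul_le_mul_of_nonneg_left hrest (inv_nonneg.mpr hσ.le)
  have hsplit : (1 + A) / σ * F = σ⁻¹ * F + A / σ * F := by ring
  nlinarith [mul_le_mul_of_nonneg_right hAσ hF]

theorem Fin.sum_univ_eq_sum_filter_lt_pred_add {m : ℕ} (hm : 0 < m) (h : Fin m → ℝ) :
    ∑ i, h i = ∑ i ∈ Finset.univ.filter (fun i : Fin m => (i : ℕ) < m - 1), h i
      + h ⟨m - 1, by omega⟩ := by
  rw [← Finset.sum_filter_add_sum_filter_not Finset.univ (fun i : Fin m => (i : ℕ) < m - 1)]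
  congr 1
  convert Finset.sum_singleton h ⟨m - 1, by omega⟩
  ext i
  simp only [Finset.mem_filter, Finset.mem_univ, true_and, not_lt, Finset.mem_singleton,
    Fin.ext_iff]
  omega

/-- Lemma 6.1: under the extra condition
`∑ fᵢ(λ)λᵢ ≥ -K₀(1 + ∑ fᵢ(λ))` on `Γ`, for compact `K ⊂ Γ` and `M > 0` there is `C > 0`
such that for all `σ ∈ (0,1]`, `λ ∈ Γ` with `|λ_m| ≤ M`, `μ ∈ K` with `f(μ) ≥ f(λ)`, and
any index `r ∈ {1,…,m-1}`:
`∑_{i<m} fᵢ|λᵢ| ≤ σ ∑_{i<m, i≠r} fᵢλᵢ² + (C/σ) ∑ᵢ fᵢ + C`. -/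
theorem stmt_3 (m : ℕ) (hm : 2 ≤ m)
    (Γ : Set (Fin m → ℝ)) (f : (Fin m → ℝ) → ℝ)
    (hΓopen : IsOpen Γ)
    (hfsmooth : ContDiffOn ℝ (⊤ : ℕ∞) f Γ)
    (hf1 : ∀ x ∈ Γ, ∀ i, 0 < pd f x i)
    (hf2 : ConcaveOn ℝ Γ f)
    (K₀ : ℝ) (hK₀ : 0 ≤ K₀)
    (hc290 : ∀ x ∈ Γ, ∑ i, pd f x i * x i ≥ -K₀ * (1 + ∑ i, pd f x i))
    (K : Set (Fin m → ℝ)) (hK : IsCompact K) (hKΓ : K ⊆ Γ)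
    (M : ℝ) (hM : 0 < M) :
    ∃ C : ℝ, 0 < C ∧ ∀ σ : ℝ, 0 < σ → σ ≤ 1 →
      ∀ lam ∈ Γ, |lam (⟨m - 1, by omega⟩ : Fin m)| ≤ M →
      ∀ μ ∈ K, f lam ≤ f μ →
      ∀ r : Fin m, (r : ℕ) < m - 1 →
      ∑ i ∈ Finset.univ.filter (fun i : Fin m => (i : ℕ) < m - 1), pd f lam i * |lam i|
        ≤ σ * ∑ i ∈ Finset.univ.filter (fun i : Fin m => (i : ℕ) < m - 1 ∧ i ≠ r),
              pd f lam i * (lam i) ^ 2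
          + (C / σ) * ∑ i, pd f lam i + C := by
  obtain ⟨B, hB, hKB⟩ := hK.isBounded.exists_pos_norm_le
  refine ⟨1 + (K₀ + M + B), by positivity, ?_⟩
  intro σ hσ hσ1 lam hlam hlamM μ hμ hfμ r hr
  set g := pd f lam
  set S := Finset.univ.filter (fun i : Fin m => (i : ℕ) < m - 1)
  have hg : ∀ i, 0 ≤ g i := fun i => (hf1 lam hlam i).le
  have hdiff := (hfsmooth.contDiffAt (hΓopen.mem_nhds hlam)).differentiableAt (by simp)
  have hupper : ∑ i, g i * lam i ≤ B * ∑ i, g i :=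
    hf2.sum_pd_mul_le_mul_sum hlam (hKΓ hμ) hdiff hfμ hg (hKB μ hμ)
  have hlower := hc290 lam hlam
  have hlast : |g ⟨m - 1, by omega⟩ * lam ⟨m - 1, by omega⟩| ≤ M * ∑ i, g i := by
    rw [abs_mul, abs_of_nonneg (hg _), mul_comm]
    exact mul_le_mul hlamM (Finset.single_le_sum (fun i _ => hg i) (Finset.mem_univ _)) (hg _)
      hM.le
  have hsumS : |∑ i ∈ S, g i * lam i| ≤ (K₀ + M + B) * ∑ i, g i + (K₀ + M + B) := by
    rw [Fin.sum_univ_eq_sum_filter_lt_pred_add (by omega)] at hupper hlower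
    rw [abs_le] at hlast ⊢
    constructor <;> nlinarith [Finset.sum_nonneg fun i (_ : i ∈ Finset.univ) => hg i]
  have hSr : Finset.univ.filter (fun i : Fin m => (i : ℕ) < m - 1 ∧ i ≠ r) = S.erase r := by
    ext i; simp [S, and_comm]
  rw [hSr]
  exact Finset.sum_mul_abs_le_of_abs_sum_mul_le (fun i _ => hg i) (by simpa [S] using hr) hσ hσ1
    (by positivity) (Finset.sum_le_sum_of_subset_of_nonneg (Finset.subset_univ S)
      fun i _ _ => hg i) hsumS
end

section
/- Let Ω ⊆ ℝ^m be an open set invariant under permutations of the coordinates, and let f : Ω → ℝ be a C¹ symmetric function (invariant under permutations of the coordinates). Let λ ∈ Ω have pairwise distinct entries and set A := diag(λ₁,…,λ_m) ∈ Sym_m. Then the function F(B) := f(λ(B)), defined for B in a neighborhood of A in Sym_m, is differentiable at A and DF(A)[η] = ∑_{i=1}^m (∂f/∂λ_i)(λ) η_{ii} for every η ∈ Sym_m. -/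
open Filter Topology Matrix

attribute [local instance] Matrix.normedAddCommGroup Matrix.normedSpace

/-- The real vector space `Sym_m` of symmetric `m × m` real matrices, as a submodule of
the space of all `m × m` real matrices. -/
def SymMat (m : ℕ) : Submodule ℝ (Matrix (Fin m) (Fin m) ℝ) where
  carrier := {A | A.IsSymm}
  add_mem' := fun {A B} hA hB => by
    simp only [Set.mem_setOf_eq, Matrix.IsSymm, Matrix.transpose_add] at *
    rw [hA, hB]
  zero_mem' := by simp [Matrix.IsSymm]
  smul_mem' := fun c A hA => by
    simp only [Set.mem_setOf_eq, Matrix.IsSymm, Matrix.transpose_smul] at *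
    rw [hA]

/-- A real symmetric matrix is Hermitian. -/
theorem IsSymm.isHermitianR {m : ℕ} {A : Matrix (Fin m) (Fin m) ℝ} (hA : A.IsSymm) :
    A.IsHermitian := by
  rw [Matrix.IsHermitian, Matrix.conjTranspose_eq_transpose_of_trivial]
  exact hA

/-- The eigenvalue vector `λ(A) ∈ ℝ^m` of a symmetric matrix `A ∈ Sym_m` (the eigenvalues
repeated according to multiplicity). -/
noncomputable def eigVec {m : ℕ} (A : SymMat m) : Fin m → ℝ :=
  (IsSymm.isHermitianR A.2).eigenvalues

/-- The second partial derivative `∂²f/∂λᵢ∂λⱼ(x)`. -/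
noncomputable def pd2 {m : ℕ} (f : (Fin m → ℝ) → ℝ) (x : Fin m → ℝ) (i j : Fin m) : ℝ :=
  fderiv ℝ (fun y => fderiv ℝ f y (Pi.single j 1)) x (Pi.single i 1)

/-! Near `diagonal λ` with distinct `λᵢ`, each `λᵢ` is a simple root of `t ↦ det (t • 1 - B)`,
so the implicit function theorem continues it to a differentiable eigenvalue `Φᵢ(B)` of `B` with
`DΦᵢ[η] = ηᵢᵢ`. The `Φᵢ(B)` stay distinct for `B` near `A`, hence `λ(B)` is a permutation of `Φ(B)`
and, `f` being symmetric, `F = f ∘ Φ` near `A`; the chain rule gives `DF(A)`. -/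

open Finset

theorem isOpen_setOf_injective {ι X : Type*} [Finite ι] [TopologicalSpace X] [T2Space X] :
    IsOpen {f : ι → X | Function.Injective f} := by
  simp only [Function.Injective, Set.ofPred_forall]
  refine isOpen_iInter_of_finite fun i => isOpen_iInter_of_finite fun j => ?_
  by_cases hij : i = j
  · simp [hij]
  · simpa [hij] using isOpen_ne_fun (continuous_apply i) (continuous_apply j)

theorem Function.Injective.exists_perm_eq_comp {ι α : Type*} [Finite ι] {u v : ι → α}
    (hv : Function.Injective v) (h : ∀ i, ∃ j, u j = v i) : ∃ σ : Equiv.Perm ι, u = v ∘ σ := by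
  choose τ hτ using h
  have hτ_inj : Function.Injective τ := fun a b hab => hv (by rw [← hτ a, ← hτ b, hab])
  let e := Equiv.ofBijective τ (Finite.injective_iff_bijective.1 hτ_inj)
  exact ⟨e.symm, funext fun k => (congrArg u (e.apply_symm_apply k)).symm.trans (hτ _)⟩

theorem fderiv_apply_eq_sum_pd_mul {m : ℕ} (f : (Fin m → ℝ) → ℝ) (x v : Fin m → ℝ) :
    fderiv ℝ f x v = ∑ i, pd f x i * v i := by
  conv_lhs => rw [← univ_sum_single v]
  refine (map_sum _ _ _).trans (sum_congr rfl fun i _ => ?_)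
  rw [pd, mul_comm, ← smul_eq_mul, ← map_smul, ← Pi.single_smul', smul_eq_mul, mul_one]

namespace Matrix

variable {n 𝕜 : Type*} [Fintype n] [DecidableEq n] [NontriviallyNormedField 𝕜]

theorem det_updateRow_diagonal {R : Type*} [CommRing R] (d : n → R) (k : n) (v : n → R) :
    ((diagonal d).updateRow k v).det = (∏ j ∈ univ.erase k, d j) * v k := by
  rw [← cramer_transpose_apply, cramer_eq_adjugate_mulVec, diagonal_transpose, adjugate_diagonal,
    mulVec_diagonal]

noncomputable def detContinuousMultilinear : ContinuousMultilinearMap 𝕜 (fun _ : n => n → 𝕜) 𝕜 :=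
  ⟨detRowAlternating.toMultilinearMap, continuous_id.matrix_det⟩

noncomputable def detDeriv (M : Matrix n n 𝕜) : Matrix n n 𝕜 →L[𝕜] 𝕜 :=
  detContinuousMultilinear.linearDeriv M

theorem detDeriv_apply (M H : Matrix n n 𝕜) :
    detDeriv M H = ∑ k, (M.updateRow k (H k)).det :=
  ContinuousMultilinearMap.linearDeriv_apply _ _ _

theorem detDeriv_diagonal_apply (d : n → 𝕜) (H : Matrix n n 𝕜) :
    detDeriv (diagonal d) H = ∑ k, (∏ j ∈ univ.erase k, d j) * H k k := by
  rw [detDeriv_apply]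
  exact sum_congr rfl fun k _ => det_updateRow_diagonal d k (H k)

theorem hasStrictFDerivAt_det (M : Matrix n n 𝕜) :
    HasStrictFDerivAt (fun M : Matrix n n 𝕜 => M.det) (detDeriv M) M :=
  (detContinuousMultilinear (n := n) (𝕜 := 𝕜)).hasStrictFDerivAt M

variable [CompleteSpace 𝕜]

noncomputable def diagCLM : Matrix n n 𝕜 →L[𝕜] n → 𝕜 :=
  (diagLinearMap n 𝕜 𝕜).toContinuousLinearMap

theorem hasStrictFDerivAt_det_smul_one_sub_diagonal (d : n → 𝕜) (i : n) :
    HasStrictFDerivAt (fun p : Matrix n n 𝕜 × 𝕜 => (p.2 • (1 : Matrix n n 𝕜) - p.1).det)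
      ((∏ j ∈ univ.erase i, (d i - d j)) •
        (ContinuousLinearMap.snd 𝕜 _ 𝕜 - (ContinuousLinearMap.proj i).comp
          (diagCLM.comp (ContinuousLinearMap.fst 𝕜 _ 𝕜))))
      (diagonal d, d i) := by
  set T : Matrix n n 𝕜 × 𝕜 →L[𝕜] Matrix n n 𝕜 :=
    (ContinuousLinearMap.snd 𝕜 _ 𝕜).smulRight 1 - ContinuousLinearMap.fst 𝕜 _ 𝕜
  have hT : d i • (1 : Matrix n n 𝕜) - diagonal d = diagonal fun j => d i - d j := by
    rw [smul_one_eq_diagonal, diagonal_sub]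
  refine ((hasStrictFDerivAt_det _).comp (diagonal d, d i) T.hasStrictFDerivAt).congr_fderiv
    (ContinuousLinearMap.ext fun p => ?_)
  change detDeriv (d i • (1 : Matrix n n 𝕜) - diagonal d) (T p)
    = (∏ j ∈ univ.erase i, (d i - d j)) * (p.2 - p.1 i i)
  rw [hT, detDeriv_diagonal_apply, sum_eq_single i]
  · simp [T, mul_comm]
  · intro k _ hk
    rw [prod_eq_zero (mem_erase.2 ⟨Ne.symm hk, mem_univ i⟩) (sub_self _), zero_mul]
  · simp

theorem exists_hasStrictFDerivAt_eigenvalue_diagonal {d : n → 𝕜} (hd : Function.Injective d)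
    (i : n) : ∃ φ : Matrix n n 𝕜 → 𝕜,
      HasStrictFDerivAt φ ((ContinuousLinearMap.proj i).comp diagCLM) (diagonal d) ∧
      φ (diagonal d) = d i ∧ ∀ᶠ B in 𝓝 (diagonal d), (φ B • (1 : Matrix n n 𝕜) - B).det = 0 := by
  -- The uniformity of the local normed structure on matrices is not `Matrix.instUniformSpace`.
  have : @CompleteSpace (Matrix n n 𝕜) PseudoMetricSpace.toUniformSpace :=
    FiniteDimensional.complete 𝕜 _
  set c := ∏ j ∈ univ.erase i, (d i - d j)
  have hc : c ≠ 0 := prod_ne_zero_iff.2 fun j hj => sub_ne_zero.2 (hd.ne (mem_erase.1 hj).1.symm)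
  have hg := hasStrictFDerivAt_det_smul_one_sub_diagonal d i
  set g' : Matrix n n 𝕜 × 𝕜 →L[𝕜] 𝕜 := c • (ContinuousLinearMap.snd 𝕜 _ 𝕜 -
    (ContinuousLinearMap.proj i).comp (diagCLM.comp (ContinuousLinearMap.fst 𝕜 _ 𝕜)))
  have hinv : (g' ∘L .inr 𝕜 _ 𝕜).IsInvertible := by
    have hinr : g' ∘L .inr 𝕜 _ 𝕜 = c • ContinuousLinearMap.id 𝕜 𝕜 := by
      ext; simp [g']
    rw [hinr]
    refine .of_inverse (g := c⁻¹ • ContinuousLinearMap.id 𝕜 𝕜) ?_ ?_ <;> ext <;> simp [hc]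
  refine ⟨hg.implicitFunctionOfProdDomain hinv, ?_, ?_, ?_⟩
  · refine (hg.hasStrictFDerivAt_implicitFunctionOfProdDomain hinv).congr_fderiv
      (ContinuousLinearMap.ext fun H => ?_)
    change -(g' ∘L .inr 𝕜 _ 𝕜).inverse ((g' ∘L .inl 𝕜 _ 𝕜) H) = H i i
    rw [neg_eq_iff_eq_neg, hinv.inverse_apply_eq]
    simp [g', diagCLM]
  · exact eq_of_tendsto_nhds (hg.tendsto_implicitFunctionOfProdDomain hinv)
  · filter_upwards [hg.eventually_apply_implicitFunctionOfProdDomain hinv] with B hB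
    rw [hB, smul_one_eq_diagonal, diagonal_sub, det_diagonal]
    exact prod_eq_zero (mem_univ i) (sub_self _)

theorem exists_hasStrictFDerivAt_eigenvalues_diagonal {d : n → 𝕜} (hd : Function.Injective d) :
    ∃ Φ : Matrix n n 𝕜 → n → 𝕜, HasStrictFDerivAt Φ diagCLM (diagonal d) ∧ Φ (diagonal d) = d ∧
      ∀ᶠ B in 𝓝 (diagonal d), ∀ i, (Φ B i • (1 : Matrix n n 𝕜) - B).det = 0 := by
  choose φ hφ hφd hφ_root using exists_hasStrictFDerivAt_eigenvalue_diagonal hd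
  exact ⟨fun B i => φ i B, hasStrictFDerivAt_pi'' hφ, funext hφd, eventually_all.2 hφ_root⟩

theorem IsHermitian.exists_eigenvalues_eq_comp_perm {B : Matrix n n ℝ} (hB : B.IsHermitian)
    {μ : n → ℝ} (hμ : Function.Injective μ) (hroot : ∀ i, (μ i • (1 : Matrix n n ℝ) - B).det = 0) :
    ∃ σ : Equiv.Perm n, hB.eigenvalues = μ ∘ σ := by
  refine hμ.exists_perm_eq_comp fun i => ?_
  have : μ i ∈ spectrum ℝ B := spectrum.mem_iff.2 <| by
    rw [Algebra.algebraMap_eq_smul_one, isUnit_iff_isUnit_det, hroot i]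
    exact not_isUnit_zero
  rwa [hB.spectrum_real_eq_range_eigenvalues] at this

end Matrix

theorem stmt_15_general (m : ℕ)
    (Ω : Set (Fin m → ℝ)) (hΩopen : IsOpen Ω)
    (f : (Fin m → ℝ) → ℝ)
    (hf : ContDiffOn ℝ 1 f Ω)
    (hfsymm : ∀ π : Equiv.Perm (Fin m), ∀ x ∈ Ω, f (x ∘ π) = f x)
    (lam : Fin m → ℝ) (hlam : lam ∈ Ω) (hdist : Function.Injective lam)
    (A : SymMat m) (hAdiag : (A : Matrix (Fin m) (Fin m) ℝ) = Matrix.diagonal lam) :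
    DifferentiableAt ℝ (fun B : SymMat m => f (eigVec B)) A ∧
    ∀ η : SymMat m,
      fderiv ℝ (fun B : SymMat m => f (eigVec B)) A η
        = ∑ i, pd f lam i * (η : Matrix (Fin m) (Fin m) ℝ) i i := by
  obtain ⟨Φ, hΦ, hΦ_lam, hΦ_root⟩ := Matrix.exists_hasStrictFDerivAt_eigenvalues_diagonal hdist
  rw [← hAdiag] at hΦ hΦ_lam hΦ_root
  set Ψ : SymMat m → Fin m → ℝ := fun B => Φ B
  have hΨ : HasFDerivAt Ψ (Matrix.diagCLM.comp (SymMat m).subtypeL) A :=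
    hΦ.hasFDerivAt.comp A (SymMat m).subtypeL.hasFDerivAt
  have hΨ_tendsto : Tendsto Ψ (𝓝 A) (𝓝 lam) := hΦ_lam ▸ hΨ.continuousAt
  have hF_eq : (fun B : SymMat m => f (eigVec B)) =ᶠ[𝓝 A] fun B => f (Ψ B) := by
    filter_upwards [(SymMat m).subtypeL.continuous.continuousAt.eventually hΦ_root,
      hΨ_tendsto.eventually (hΩopen.mem_nhds hlam),
      hΨ_tendsto.eventually (isOpen_setOf_injective.mem_nhds hdist)] with B hB_root hB_Ω hB_inj
    obtain ⟨σ, hσ⟩ := (IsSymm.isHermitianR B.2).exists_eigenvalues_eq_comp_perm hB_inj hB_root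
    rw [eigVec, hσ]
    exact hfsymm σ _ hB_Ω
  have hf_lam : HasFDerivAt f (fderiv ℝ f lam) (Ψ A) := hΦ_lam ▸
    ((hf.differentiableOn one_ne_zero).differentiableAt (hΩopen.mem_nhds hlam)).hasFDerivAt
  have hF := (hf_lam.comp A hΨ).congr_of_eventuallyEq hF_eq
  exact ⟨hF.differentiableAt, fun η =>
    (DFunLike.congr_fun hF.fderiv η).trans (fderiv_apply_eq_sum_pd_mul f lam _)⟩

/-- if `f` is `C¹` and symmetric on an open permutation-invariant set
`Ω ⊆ ℝ^m`, and `λ ∈ Ω` has pairwise distinct entries, then `F(B) = f(λ(B))` on `Sym_m` is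
differentiable at `A = diag(λ)` with `DF(A)[η] = ∑ᵢ fᵢ(λ) ηᵢᵢ`. -/
theorem stmt_15 (m : ℕ) (hm : 2 ≤ m)
    (Ω : Set (Fin m → ℝ)) (hΩopen : IsOpen Ω)
    (hΩperm : ∀ π : Equiv.Perm (Fin m), ∀ x ∈ Ω, x ∘ π ∈ Ω)
    (f : (Fin m → ℝ) → ℝ)
    (hf : ContDiffOn ℝ 1 f Ω)
    (hfsymm : ∀ π : Equiv.Perm (Fin m), ∀ x ∈ Ω, f (x ∘ π) = f x)
    (lam : Fin m → ℝ) (hlam : lam ∈ Ω) (hdist : Function.Injective lam)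
    (A : SymMat m) (hAdiag : (A : Matrix (Fin m) (Fin m) ℝ) = Matrix.diagonal lam) :
    DifferentiableAt ℝ (fun B : SymMat m => f (eigVec B)) A ∧
    ∀ η : SymMat m,
      fderiv ℝ (fun B : SymMat m => f (eigVec B)) A η
        = ∑ i, pd f lam i * (η : Matrix (Fin m) (Fin m) ℝ) i i :=
  stmt_15_general m Ω hΩopen f hf hfsymm lam hlam hdist A hAdiag
end
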